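/- For every Ĵ ∈ [0,∞) and every function f : Ω → ℝ, the Dirichlet forms of the Wolff and Glauber dynamics for the 1D Ising model satisfy E^W_{μ_N}(f) ≥ 2·e^{−2Ĵ}·E^GD_{μ_N}(f). -/
import Mathlib


open Real Finset

noncomputable section

/-- Spin value of a Boolean: `true ↦ +1`, `false ↦ -1`. -/
def spin (b : Bool) : ℝ := if b then 1 else -1

/-- Configurations of the 1D Ising model on the cycle `ZMod N`. -/
abbrev Config (N : ℕ) := ZMod N → Bool

/-- Flip the spins of `σ` at all sites of `A`. -/
def flipSpins {N : ℕ} (A : Finset (ZMod N)) (σ : Config N) : Config N :=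
  fun i => if i ∈ A then !(σ i) else σ i

/-- `A` is a (nonempty) arc `{a, a+1, …, a+k}` of the cycle. -/
def IsArc {N : ℕ} (A : Finset (ZMod N)) : Prop :=
  ∃ (a : ZMod N) (k : ℕ),
    A = Finset.image (fun t : ℕ => a + (t : ZMod N)) (Finset.range (k + 1))

/-- `σ` is constant on `A`. -/
def ConstOn {N : ℕ} (σ : Config N) (A : Finset (ZMod N)) : Prop :=
  ∀ i ∈ A, ∀ j ∈ A, σ i = σ j

/-- The set of sites where two configurations differ. -/
def diffSet {N : ℕ} [NeZero N] (σ η : Config N) : Finset (ZMod N) :=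
  Finset.univ.filter fun i => σ i ≠ η i

/-- The edge boundary of `A`: edges `(i, i+1)` with exactly one endpoint in `A`. -/
def edgeBoundary {N : ℕ} [NeZero N] (A : Finset (ZMod N)) : Finset (ZMod N) :=
  Finset.univ.filter fun i => ¬ ((i ∈ A) ↔ (i + 1 ∈ A))

/-- Edges `(i, i+1)` on which the spins of `σ` agree (i.e. `σ_i · σ_{i+1} = +1`). -/
def Bplus {N : ℕ} [NeZero N] (σ : Config N) : Finset (ZMod N) :=
  Finset.univ.filter fun i => σ i = σ (i + 1)

open scoped Classical in
/-- Transition matrix of the Wolff dynamics for the 1D Ising model, with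
`κ = 1 - e^{-2Ĵ}` and `κ̂ = e^{-2Ĵ}`. -/
noncomputable def PW (N : ℕ) [NeZero N] (J : ℝ) (σ η : Config N) : ℝ :=
  if IsArc (diffSet σ η) ∧ ConstOn σ (diffSet σ η) then
    if diffSet σ η = Finset.univ then
      ((N : ℝ) * exp (-2 * J) + (1 - exp (-2 * J))) * (1 - exp (-2 * J)) ^ (N - 1)
    else
      ((diffSet σ η).card : ℝ) / N * (1 - exp (-2 * J)) ^ ((diffSet σ η).card - 1) *
        exp (-2 * J) ^ ((edgeBoundary (diffSet σ η) ∩ Bplus σ).card)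
  else 0

/-- Energy functional `∑ i, σ_i σ_{i+1}` of a configuration. -/
noncomputable def energy (N : ℕ) [NeZero N] (σ : Config N) : ℝ :=
  ∑ i : ZMod N, spin (σ i) * spin (σ (i + 1))

/-- The Gibbs measure of the 1D Ising model with periodic boundary conditions. -/
noncomputable def gibbs (N : ℕ) [NeZero N] (J : ℝ) (σ : Config N) : ℝ :=
  exp (J * energy N σ) / ∑ η : Config N, exp (J * energy N η)

/-- Expectation with respect to the Gibbs measure. -/
noncomputable def Emu (N : ℕ) [NeZero N] (J : ℝ) (f : Config N → ℝ) : ℝ :=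
  ∑ σ : Config N, f σ * gibbs N J σ

/-- Dirichlet form of a transition matrix `P` with respect to a measure `μ`. -/
noncomputable def dirichlet (N : ℕ) [NeZero N] (P : Config N → Config N → ℝ)
    (μ : Config N → ℝ) (f : Config N → ℝ) : ℝ :=
  (1/2) * ∑ σ : Config N, ∑ η : Config N, (f σ - f η)^2 * P η σ * μ η

/-- Single-site transition probability of the Glauber dynamics:
`P^GD(σ,σ^i) = (1/N)·e^{−Ĵσ_i(σ_{i−1}+σ_{i+1})} /
  (e^{Ĵ(σ_{i−1}+σ_{i+1})} + e^{−Ĵ(σ_{i−1}+σ_{i+1})})`. -/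
noncomputable def PGDsite (N : ℕ) [NeZero N] (J : ℝ) (σ : Config N) (i : ZMod N) : ℝ :=
  (1 / (N : ℝ)) *
    (exp (-J * spin (σ i) * (spin (σ (i - 1)) + spin (σ (i + 1)))) /
      (exp (J * (spin (σ (i - 1)) + spin (σ (i + 1)))) +
        exp (-J * (spin (σ (i - 1)) + spin (σ (i + 1))))))

/-- Transition matrix of the Glauber dynamics: `P^GD(σ,η) = 0` unless
`η = σ^i` for some site `i`, in which case it is given by `PGDsite`. -/
noncomputable def PGD (N : ℕ) [NeZero N] (J : ℝ) (σ η : Config N) : ℝ :=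
  ∑ i : ZMod N, if η = flipSpins {i} σ then PGDsite N J σ i else 0

-- auxiliary --

lemma exp_neg_two_le_one {J : ℝ} (hJ : 0 ≤ J) : exp (-2*J) ≤ 1 := by
  calc exp (-2*J) ≤ exp 0 := Real.exp_le_exp.mpr (by linarith)
    _ = 1 := Real.exp_zero

lemma PW_nonneg (N : ℕ) [NeZero N] {J : ℝ} (hJ : 0 ≤ J) (σ η : Config N) :
    0 ≤ PW N J σ η := by
  classical
  have h1 : 0 ≤ 1 - exp (-2*J) := by linarith [exp_neg_two_le_one hJ]
  unfold PW
  split_ifs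
  · apply mul_nonneg
    · have := (Real.exp_pos (-2*J)).le
      have hN : (0:ℝ) ≤ (N:ℝ) := Nat.cast_nonneg N
      nlinarith
    · exact pow_nonneg h1 _
  · apply mul_nonneg (mul_nonneg ?_ (pow_nonneg h1 _)) (pow_nonneg (Real.exp_pos _).le _)
    positivity
  · exact le_rfl

lemma gibbs_nonneg (N : ℕ) [NeZero N] (J : ℝ) (σ : Config N) : 0 ≤ gibbs N J σ := by
  unfold gibbs
  positivity

lemma spin_eq_iff (u v : Bool) : spin u = spin v ↔ u = v := by
  cases u <;> cases v <;> simp [spin] <;> norm_num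

lemma diffSet_flip {N : ℕ} [NeZero N] (η : Config N) (i : ZMod N) :
    diffSet η (flipSpins {i} η) = {i} := by
  ext j
  simp only [diffSet, flipSpins, Finset.mem_filter, Finset.mem_univ, true_and,
    Finset.mem_singleton]
  by_cases h : j = i <;> simp [h]

lemma eq_flip_of_diffSet {N : ℕ} [NeZero N] {η σ : Config N} {i₀ : ZMod N}
    (h : diffSet η σ = {i₀}) : σ = flipSpins {i₀} η := by
  funext j
  have hj := Finset.ext_iff.mp h j
  simp only [diffSet, Finset.mem_filter, Finset.mem_univ, true_and,
    Finset.mem_singleton] at hj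
  by_cases hji : j = i₀
  · subst hji
    have h2 : η j ≠ σ j := hj.mpr rfl
    simp only [flipSpins, Finset.mem_singleton, if_pos rfl]
    cases hσ : σ j <;> cases hη : η j <;> simp_all
  · have h2 : η j = σ j := by by_contra hc; exact hji (hj.mp hc)
    simp [flipSpins, hji, h2]

lemma eb_singleton {N : ℕ} [NeZero N] (h1 : (1 : ZMod N) ≠ 0) (i₀ : ZMod N) :
    edgeBoundary ({i₀} : Finset (ZMod N)) = {i₀ - 1, i₀} := by
  ext i
  simp only [edgeBoundary, Finset.mem_filter, Finset.mem_univ, true_and,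
    Finset.mem_singleton, Finset.mem_insert]
  constructor
  · intro h
    by_cases hi : i = i₀
    · right; exact hi
    · left
      have h2 : i + 1 = i₀ := by tauto
      exact eq_sub_of_add_eq h2
  · rintro (h | h)
    · rw [h]
      have h2 : i₀ - 1 + 1 = i₀ := sub_add_cancel _ _
      have h3 : i₀ - 1 ≠ i₀ := fun hh => h1 (by rwa [sub_eq_self] at hh)
      simp [h2, h3]
    · rw [h]
      have h3 : i₀ + 1 ≠ i₀ := by
        intro hh
        apply h1
        have h4 : i₀ + 1 = i₀ + 0 := by rw [add_zero]; exact hh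
        exact add_left_cancel h4
      simp [h3]

lemma pair_inter_card {α : Type*} [DecidableEq α] {a b : α} (hab : a ≠ b) (S : Finset α) :
    (({a, b} : Finset α) ∩ S).card =
      (if a ∈ S then 1 else 0) + (if b ∈ S then 1 else 0) := by
  rw [← Finset.filter_mem_eq_inter, Finset.filter_insert, Finset.filter_singleton]
  split_ifs with h1 h2 h2
  · rw [Finset.card_insert_of_notMem (by simp [hab])]; simp
  · simp
  · simp
  · simp

lemma cosh_ge_two (x : ℝ) : 2 ≤ exp x + exp (-x) := by
  have h : exp x * exp (-x) = 1 := by rw [← Real.exp_add]; simp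
  nlinarith [sq_nonneg (exp x - 1), Real.exp_pos x, Real.exp_pos (-x)]

lemma real_key (J c : ℝ) (hJ : 0 ≤ J) (hc : 0 ≤ c) (ε a b : ℝ)
    (hε : ε = 1 ∨ ε = -1) (ha : a = 1 ∨ a = -1) (hb : b = 1 ∨ b = -1)
    (m : ℕ) (hm : m = (if a = ε then 1 else 0) + (if b = ε then 1 else 0)) :
    2 * exp (-2*J) * (c * (exp (-J * ε * (a+b)) / (exp (J*(a+b)) + exp (-J*(a+b))))) ≤
      c * exp (-2*J) ^ m := by
  have h8 : (m : ℝ) * (-2*J) = -2*J + (-J * ε * (a+b)) := by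
    rcases hε with rfl | rfl <;> rcases ha with rfl | rfl <;> rcases hb with rfl | rfl <;>
      subst hm <;> norm_num <;> ring
  have hid : exp (-2*J) ^ m = exp (-2*J) * exp (-J * ε * (a+b)) := by
    rw [← Real.exp_nat_mul, h8, Real.exp_add]
  rw [hid]
  have hY : 2 ≤ exp (J*(a+b)) + exp (-J*(a+b)) := by
    have h := cosh_ge_two (J*(a+b))
    have he : -(J*(a+b)) = -J*(a+b) := by ring
    rw [he] at h
    exact h
  calc 2 * exp (-2*J) * (c * (exp (-J * ε * (a+b)) / (exp (J*(a+b)) + exp (-J*(a+b)))))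
      ≤ 2 * exp (-2*J) * (c * (exp (-J * ε * (a+b)) / 2)) := by
        have hx : 0 < exp (-J * ε * (a+b)) := Real.exp_pos _
        have hfrac : exp (-J * ε * (a+b)) / (exp (J*(a+b)) + exp (-J*(a+b))) ≤
            exp (-J * ε * (a+b)) / 2 := by
          apply div_le_div_of_nonneg_left hx.le (by norm_num) hY
        have hcoef : 0 ≤ 2 * exp (-2*J) * c := by positivity
        calc 2 * exp (-2*J) * (c * (exp (-J * ε * (a+b)) / (exp (J*(a+b)) + exp (-J*(a+b)))))
            = 2 * exp (-2*J) * c * (exp (-J * ε * (a+b)) / (exp (J*(a+b)) + exp (-J*(a+b)))) := by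
              ring
          _ ≤ 2 * exp (-2*J) * c * (exp (-J * ε * (a+b)) / 2) :=
              mul_le_mul_of_nonneg_left hfrac hcoef
          _ = 2 * exp (-2*J) * (c * (exp (-J * ε * (a+b)) / 2)) := by ring
    _ = c * (exp (-2*J) * exp (-J * ε * (a+b))) := by ring

lemma pointwise_key (N : ℕ) (hN : 3 ≤ N) [NeZero N] {J : ℝ} (hJ : 0 ≤ J)
    (η σ : Config N) :
    2 * exp (-2*J) * PGD N J η σ ≤ PW N J η σ := by
  classical
  haveI : Fact (1 < N) := ⟨by omega⟩
  have h10 : (1 : ZMod N) ≠ 0 := one_ne_zero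
  by_cases hD : ∃ i₀, σ = flipSpins {i₀} η
  · obtain ⟨i₀, rfl⟩ := hD
    have hdiff : diffSet η (flipSpins {i₀} η) = {i₀} := diffSet_flip η i₀
    -- PGD value
    have hPGD : PGD N J η (flipSpins {i₀} η) = PGDsite N J η i₀ := by
      unfold PGD
      rw [Finset.sum_eq_single_of_mem i₀ (Finset.mem_univ _)]
      · rw [if_pos rfl]
      · intro i _ hi
        rw [if_neg]
        intro h
        apply hi
        have := diffSet_flip η i
        rw [← h, hdiff] at this
        simpa using this.symm
    -- PW value
    have harc : IsArc ({i₀} : Finset (ZMod N)) := ⟨i₀, 0, by simp⟩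
    have hconst : ConstOn η ({i₀} : Finset (ZMod N)) := by
      intro i hi j hj
      simp only [Finset.mem_singleton] at hi hj
      rw [hi, hj]
    have hne : ({i₀} : Finset (ZMod N)) ≠ Finset.univ := by
      intro h
      have := congrArg Finset.card h
      simp [Finset.card_univ, ZMod.card] at this
      omega
    have hPW : PW N J η (flipSpins {i₀} η) =
        1 / (N : ℝ) * exp (-2*J) ^ ((edgeBoundary ({i₀} : Finset (ZMod N)) ∩ Bplus η).card) := by
      unfold PW
      rw [hdiff, if_pos ⟨harc, hconst⟩, if_neg hne]
      simp
    rw [hPGD, hPW]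
    -- the boundary/agreement count
    have hsub : i₀ - 1 + 1 = i₀ := sub_add_cancel _ _
    have hne2 : i₀ - 1 ≠ i₀ := fun h => h10 (by rwa [sub_eq_self] at h)
    have hcard : (edgeBoundary ({i₀} : Finset (ZMod N)) ∩ Bplus η).card =
        (if spin (η (i₀ - 1)) = spin (η i₀) then 1 else 0) +
          (if spin (η (i₀ + 1)) = spin (η i₀) then 1 else 0) := by
      rw [eb_singleton h10, pair_inter_card hne2]
      congr 1
      · by_cases h : η (i₀ - 1) = η i₀
        · rw [if_pos, if_pos ((spin_eq_iff _ _).mpr h)]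
          simp [Bplus, hsub, h]
        · rw [if_neg, if_neg (fun hc => h ((spin_eq_iff _ _).mp hc))]
          simp [Bplus, hsub, h]
      · by_cases h : η i₀ = η (i₀ + 1)
        · rw [if_pos, if_pos ((spin_eq_iff _ _).mpr h.symm)]
          simp [Bplus, h]
        · rw [if_neg, if_neg (fun hc => h ((spin_eq_iff _ _).mp hc).symm)]
          simp [Bplus, h]
    rw [hcard]
    unfold PGDsite
    apply real_key J (1 / (N:ℝ)) hJ (by positivity) _ _ _
      (by cases η i₀ <;> simp [spin]) (by cases η (i₀ - 1) <;> simp [spin])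
      (by cases η (i₀ + 1) <;> simp [spin]) _ rfl
  · have hz : PGD N J η σ = 0 := by
      unfold PGD
      apply Finset.sum_eq_zero
      intro i _
      rw [if_neg (fun h => hD ⟨i, h⟩)]
    rw [hz, mul_zero]
    exact PW_nonneg N hJ η σ

/-- **Comparison of Dirichlet forms** of the Wolff and Glauber dynamics:
`E^W_{μ_N}(f) ≥ 2·e^{−2Ĵ}·E^GD_{μ_N}(f)`. -/
theorem wolff_dirichlet_ge_glauber (N : ℕ) (hN : 3 ≤ N) [NeZero N]
    (J : ℝ) (hJ : 0 ≤ J) (f : Config N → ℝ) :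
    dirichlet N (PW N J) (gibbs N J) f ≥
      2 * exp (-2 * J) * dirichlet N (PGD N J) (gibbs N J) f := by
  rw [ge_iff_le]
  unfold dirichlet
  have hterm : ∀ σ η : Config N,
      2 * exp (-2*J) * ((f σ - f η)^2 * PGD N J η σ * gibbs N J η) ≤
        (f σ - f η)^2 * PW N J η σ * gibbs N J η := by
    intro σ η
    have h := pointwise_key N hN hJ η σ
    have h0 : 0 ≤ (f σ - f η)^2 * gibbs N J η :=
      mul_nonneg (sq_nonneg _) (gibbs_nonneg N J η)
    calc 2 * exp (-2*J) * ((f σ - f η)^2 * PGD N J η σ * gibbs N J η)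
        = ((f σ - f η)^2 * gibbs N J η) * (2 * exp (-2*J) * PGD N J η σ) := by ring
      _ ≤ ((f σ - f η)^2 * gibbs N J η) * PW N J η σ := mul_le_mul_of_nonneg_left h h0
      _ = (f σ - f η)^2 * PW N J η σ * gibbs N J η := by ring
  have h2 : 2 * exp (-2*J) *
        (∑ σ : Config N, ∑ η : Config N, (f σ - f η)^2 * PGD N J η σ * gibbs N J η) =
      ∑ σ : Config N, ∑ η : Config N,
        2 * exp (-2*J) * ((f σ - f η)^2 * PGD N J η σ * gibbs N J η) := by
    rw [Finset.mul_sum]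
    exact Finset.sum_congr rfl fun σ _ => Finset.mul_sum _ _ _
  have hle : ∑ σ : Config N, ∑ η : Config N,
        2 * exp (-2*J) * ((f σ - f η)^2 * PGD N J η σ * gibbs N J η) ≤
      ∑ σ : Config N, ∑ η : Config N, (f σ - f η)^2 * PW N J η σ * gibbs N J η :=
    Finset.sum_le_sum fun σ _ => Finset.sum_le_sum fun η _ => hterm σ η
  linarith
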